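/- arXiv:1401.3928 — 5 statements merged into one kernel-verified Lean document; each statement's English description precedes it below -/
import Mathlib

section
/- If there exists a binary constant-weight code of length n, weight w, minimum distance d, and size at least 2^k, then there exists a systematic binary constant-weight code of length n+2k, weight w+k, and minimum distance d+2 with 2^k codewords. Specifically, for any injection phi: F_2^k -> C, the code D = {(x, x̄, phi(x)) : x in F_2^k} has these parameters and is systematic with information set the first k coordinates. -/
open Finset

/-- Hamming weight of a binary word. -/
def wt {n : ℕ} (x : Fin n → Bool) : ℕ := (Finset.univ.filter fun i => x i = true).card

/-- `A n d w`: max size of a binary constant-weight code of length `n`, distance `d`, weight `w`. -/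
noncomputable def A (n d w : ℕ) : ℕ :=
  sSup {s | ∃ C : Finset (Fin n → Bool), C.card = s ∧
    (∀ x ∈ C, wt x = w) ∧ ∀ x ∈ C, ∀ y ∈ C, x ≠ y → d ≤ hammingDist x y}

/-- `Aq q m d`: max size of a `q`-ary code of length `m` with minimum distance `d`. -/
noncomputable def Aq (q m d : ℕ) : ℕ :=
  sSup {s | ∃ C : Finset (Fin m → Fin q), C.card = s ∧
    ∀ x ∈ C, ∀ y ∈ C, x ≠ y → d ≤ hammingDist x y}

/-- `M m n d w`: max size of a multiply constant-weight code: `m × n` binary matrices with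
constant row weight `w` and pairwise (flattened) Hamming distance at least `d`. -/
noncomputable def M (m n d w : ℕ) : ℕ :=
  sSup {s | ∃ C : Finset (Fin m → Fin n → Bool), C.card = s ∧
    (∀ x ∈ C, ∀ i, wt (x i) = w) ∧
    ∀ x ∈ C, ∀ y ∈ C, x ≠ y → d ≤ ∑ i, hammingDist (x i) (y i)}

def Systematic {n : ℕ} (C : Finset (Fin n → Bool)) (k : ℕ) : Prop :=
  ∃ I : Finset (Fin n), I.card = k ∧
    ∀ f : Fin n → Bool, ∃! x, x ∈ C ∧ ∀ i ∈ I, x i = f i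

/-- `Ssyscw n d w`: the largest size of a systematic binary constant-weight `(n,d,w)` code. -/
noncomputable def Ssyscw (n d w : ℕ) : ℕ :=
  sSup {s | ∃ k, s = 2 ^ k ∧ ∃ C : Finset (Fin n → Bool), C.card = 2 ^ k ∧
    Systematic C k ∧ (∀ x ∈ C, wt x = w) ∧
    ∀ x ∈ C, ∀ y ∈ C, x ≠ y → d ≤ hammingDist x y}

/-- `D = {(x, x̄, φ(x)) : x ∈ 𝔽₂^k}`. -/
def tripleCode {k n : ℕ} (phi : (Fin k → Bool) → (Fin n → Bool)) :
    Finset (Fin (k + k + n) → Bool) :=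
  Finset.univ.image fun x => Fin.append (Fin.append x (fun i => ! x i)) (phi x)

/-!
Since `wt x + wt x̄ = k` and `d(x̄, ȳ) = d(x, y)`, every word `(x, x̄, φ(x))` has weight
`k + w`, and two of them are at distance `2 d(x, y) + d(φ(x), φ(y)) ≥ 2 + d`. The first `k`
coordinates read off `x`, so they form an information set.
-/

lemma wt_eq_sum {n : ℕ} (x : Fin n → Bool) :
    wt x = ∑ i, if x i = true then 1 else 0 := by
  rw [wt, card_filter]

lemma wt_append {m n : ℕ} (a : Fin m → Bool) (b : Fin n → Bool) :
    wt (Fin.append a b) = wt a + wt b := by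
  simp only [wt_eq_sum, Fin.sum_univ_add, Fin.append_left, Fin.append_right]

lemma wt_add_wt_not {n : ℕ} (x : Fin n → Bool) : wt x + wt (fun i => !x i) = n := by
  rw [wt_eq_sum, wt_eq_sum, ← sum_add_distrib]
  have hone : ∀ i, ((if x i = true then 1 else 0) + if (!x i) = true then 1 else 0) = 1 := by
    intro i; cases x i <;> rfl
  simp only [hone, sum_const, card_univ, Fintype.card_fin, smul_eq_mul, mul_one]

lemma hammingDist_append {m n : ℕ} (a c : Fin m → Bool) (b d : Fin n → Bool) :
    hammingDist (Fin.append a b) (Fin.append c d) = hammingDist a c + hammingDist b d := by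
  simp only [hammingDist, card_filter, Fin.sum_univ_add, Fin.append_left, Fin.append_right]

lemma hammingDist_not_not {n : ℕ} (x y : Fin n → Bool) :
    hammingDist (fun i => !x i) (fun i => !y i) = hammingDist x y := by
  simp only [hammingDist, ne_eq, Bool.not_eq_eq_eq_not, Bool.not_not]

lemma systematic_image {k m : ℕ} (g : (Fin k → Bool) → (Fin m → Bool)) (e : Fin k → Fin m)
    (he : Function.Injective e) (hg : ∀ x i, g x (e i) = x i) :
    Systematic (univ.image g) k := by
  refine ⟨univ.image e, by rw [card_image_of_injective _ he, card_univ, Fintype.card_fin], ?_⟩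
  intro f
  refine ⟨g (f ∘ e), ⟨mem_image_of_mem _ (mem_univ _), ?_⟩, ?_⟩
  · simp only [mem_image, mem_univ, true_and, forall_exists_index, forall_apply_eq_imp_iff, hg,
      Function.comp_apply, implies_true]
  · rintro _ ⟨hz, hzf⟩
    obtain ⟨x, -, rfl⟩ := mem_image.1 hz
    congr
    funext i
    rw [← hg x i, Function.comp_apply, hzf _ (mem_image_of_mem _ (mem_univ i))]

lemma le_Ssyscw {m d w k : ℕ} (D : Finset (Fin m → Bool)) (hcard : D.card = 2 ^ k)
    (hsys : Systematic D k) (hwt : ∀ x ∈ D, wt x = w)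
    (hd : ∀ x ∈ D, ∀ y ∈ D, x ≠ y → d ≤ hammingDist x y) :
    2 ^ k ≤ Ssyscw m d w := by
  refine le_csSup ⟨2 ^ m, ?_⟩ ⟨k, rfl, D, hcard, hsys, hwt, hd⟩
  rintro _ ⟨k', rfl, D', hD', -⟩
  calc 2 ^ k' = D'.card := hD'.symm
    _ ≤ Fintype.card (Fin m → Bool) := card_le_univ D'
    _ = 2 ^ m := by simp

section tripleCode

variable {k n : ℕ} (phi : (Fin k → Bool) → (Fin n → Bool))

def tripleWord (x : Fin k → Bool) : Fin (k + k + n) → Bool :=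
  Fin.append (Fin.append x (fun i => !x i)) (phi x)

lemma tripleCode_eq_image : tripleCode phi = univ.image (tripleWord phi) := rfl

lemma tripleWord_castAdd (x : Fin k → Bool) (i : Fin k) :
    tripleWord phi x (Fin.castAdd n (Fin.castAdd k i)) = x i := by
  simp only [tripleWord, Fin.append_left]

lemma tripleWord_injective : Function.Injective (tripleWord phi) := fun x y hxy =>
  funext fun i => by rw [← tripleWord_castAdd phi x i, hxy, tripleWord_castAdd]

lemma card_tripleCode : (tripleCode phi).card = 2 ^ k := by
  rw [tripleCode_eq_image, card_image_of_injective _ (tripleWord_injective phi), card_univ]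
  simp

lemma wt_tripleWord (x : Fin k → Bool) : wt (tripleWord phi x) = wt (phi x) + k := by
  rw [tripleWord, wt_append, wt_append, wt_add_wt_not, add_comm]

lemma hammingDist_tripleWord (x y : Fin k → Bool) :
    hammingDist (tripleWord phi x) (tripleWord phi y) =
      2 * hammingDist x y + hammingDist (phi x) (phi y) := by
  rw [tripleWord, tripleWord, hammingDist_append, hammingDist_append, hammingDist_not_not,
    two_mul]

lemma systematic_tripleCode : Systematic (tripleCode phi) k :=
  systematic_image _ _ (Fin.castAdd_injective _ _ |>.comp (Fin.castAdd_injective _ _))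
    (tripleWord_castAdd phi)

end tripleCode

/-- Extension: given a CWC`(n,d,w)` `C` and an injection `φ : 𝔽₂^k → C`, the code
`{(x, x̄, φ(x))}` is a systematic constant-weight code of length `n+2k`, weight `w+k`,
distance `d+2`, size `2^k`; hence `s(n+2k, d+2, w+k) ≥ k`. -/
theorem stmt3 (n d w k : ℕ) (C : Finset (Fin n → Bool))
    (hwt : ∀ x ∈ C, wt x = w)
    (hd : ∀ x ∈ C, ∀ y ∈ C, x ≠ y → d ≤ hammingDist x y)
    (phi : (Fin k → Bool) → (Fin n → Bool)) (hphi : Function.Injective phi)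
    (hrange : ∀ x, phi x ∈ C) :
    (tripleCode phi).card = 2 ^ k ∧
    (∀ y ∈ tripleCode phi, wt y = w + k) ∧
    (∀ y ∈ tripleCode phi, ∀ z ∈ tripleCode phi, y ≠ z → d + 2 ≤ hammingDist y z) ∧
    Systematic (tripleCode phi) k ∧
    2 ^ k ≤ Ssyscw (k + k + n) (d + 2) (w + k) := by
  have hwtD : ∀ y ∈ tripleCode phi, wt y = w + k := by
    simp only [tripleCode_eq_image, mem_image, mem_univ, true_and, forall_exists_index,
      forall_apply_eq_imp_iff]
    intro x
    rw [wt_tripleWord, hwt _ (hrange x)]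
  have hdD : ∀ y ∈ tripleCode phi, ∀ z ∈ tripleCode phi, y ≠ z → d + 2 ≤ hammingDist y z := by
    simp only [tripleCode_eq_image, mem_image, mem_univ, true_and, forall_exists_index,
      forall_apply_eq_imp_iff]
    intro x y hxy
    have hne : x ≠ y := fun h => hxy (congrArg _ h)
    have hpos : 0 < hammingDist x y := hammingDist_pos.2 hne
    have hdphi := hd _ (hrange x) _ (hrange y) (hphi.ne hne)
    rw [hammingDist_tripleWord]
    omega
  exact ⟨card_tripleCode phi, hwtD, hdD, systematic_tripleCode phi,
    le_Ssyscw _ (card_tripleCode phi) (systematic_tripleCode phi) hwtD hdD⟩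
end

section
/- Let X be an alphabet of size q and phi: X -> {0,1}^q send x to its characteristic (indicator) vector. For any q-ary code of length mw with minimum distance d, replacing each symbol by its indicator vector yields a binary code of length qmw in which each of the m consecutive blocks of length qw has weight exactly w, with minimum distance at least 2d. Hence M(m,qw,2d,w) >= A_q(mw,d). -/
open Finset

/-!
Replacing a symbol by its indicator vector in `{0,1}^q` gives a word of weight one, and two
distinct symbols have indicator vectors at Hamming distance exactly two. Expanding a `q`-ary word
of length `mw` symbol by symbol therefore produces a binary word whose `m` blocks (of `w` symbols,
i.e. `qw` bits) each have weight `w`, and the expansion exactly doubles Hamming distances. In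
particular it is injective, so it maps a code of distance `d` onto a multiply constant-weight code
of the same size with distance `2d`.
-/

section HammingDist

variable {ι κ β : Type*} [Fintype ι] [Fintype κ] [DecidableEq β]

lemma card_filter_comp_equiv (e : ι ≃ κ) (p : κ → Prop) [DecidablePred p] :
    #{i | p (e i)} = #{k | p k} :=
  card_equiv e (by simp)

lemma hammingDist_comp_equiv (e : ι ≃ κ) (x y : κ → β) :
    hammingDist (x ∘ e) (y ∘ e) = hammingDist x y :=
  card_filter_comp_equiv e fun k => x k ≠ y k

lemma card_filter_prod (p : ι × κ → Prop) [DecidablePred p] :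
    #{ij | p ij} = ∑ i, #{j | p (i, j)} := by
  simp only [card_filter, Fintype.sum_prod_type]

lemma hammingDist_prod (x y : ι × κ → β) :
    hammingDist x y = ∑ i, hammingDist (fun j => x (i, j)) (fun j => y (i, j)) :=
  card_filter_prod fun ij => x ij ≠ y ij

lemma two_mul_hammingDist (x y : ι → β) :
    2 * hammingDist x y = ∑ i, if x i = y i then 0 else 2 := by
  rw [hammingDist, card_filter, mul_sum]
  exact sum_congr rfl fun i _ => by split_ifs <;> simp_all

end HammingDist

section Indicator

variable {κ α : Type*} [Fintype κ] [Fintype α] [DecidableEq α]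

/-- The indicator vector `φ(b) ∈ {0,1}^α` of a symbol `b`. -/
def symbolIndicator (b : α) : α → Bool := fun a => decide (a = b)

lemma card_filter_symbolIndicator (b : α) : #{a | symbolIndicator b a = true} = 1 := by
  simp [symbolIndicator, filter_eq']

lemma hammingDist_symbolIndicator (b c : α) :
    hammingDist (symbolIndicator b) (symbolIndicator c) = if b = c then 0 else 2 := by
  split_ifs with hbc
  · simp [hbc]
  · have hsupport : univ.filter (fun a => symbolIndicator b a ≠ symbolIndicator c a) = {b, c} := by
      ext a
      by_cases hab : a = b <;> by_cases hac : a = c <;> simp_all [symbolIndicator, eq_comm]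
    rw [hammingDist, hsupport, card_pair hbc]

/-- The symbol-by-symbol indicator expansion of a word, indexed by (position, symbol). -/
def wordIndicator (x : κ → α) : κ × α → Bool := fun p => symbolIndicator (x p.1) p.2

lemma card_filter_wordIndicator (x : κ → α) :
    #{p | wordIndicator x p = true} = Fintype.card κ := by
  rw [card_filter_prod, Fintype.card_eq_sum_ones]
  exact sum_congr rfl fun j _ => card_filter_symbolIndicator (x j)

lemma hammingDist_wordIndicator (x y : κ → α) :
    hammingDist (wordIndicator x) (wordIndicator y) = 2 * hammingDist x y := by
  rw [hammingDist_prod, two_mul_hammingDist]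
  exact sum_congr rfl fun j _ => hammingDist_symbolIndicator (x j) (y j)

end Indicator

section BlockExpansion

variable {m w q : ℕ}

def block {α : Type*} (x : Fin (m * w) → α) (i : Fin m) : Fin w → α :=
  fun j => x (finProdFinEquiv (i, j))

lemma hammingDist_eq_sum_block {α : Type*} [DecidableEq α] (x y : Fin (m * w) → α) :
    hammingDist x y = ∑ i, hammingDist (block x i) (block y i) := by
  rw [← hammingDist_comp_equiv finProdFinEquiv x y, hammingDist_prod]
  rfl

def bitIndexEquiv (q w : ℕ) : Fin (q * w) ≃ Fin w × Fin q :=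
  (finCongr (Nat.mul_comm q w)).trans finProdFinEquiv.symm

def blockIndicator (x : Fin (m * w) → Fin q) (i : Fin m) : Fin (q * w) → Bool :=
  wordIndicator (block x i) ∘ bitIndexEquiv q w

lemma wt_blockIndicator (x : Fin (m * w) → Fin q) (i : Fin m) : wt (blockIndicator x i) = w :=
  (card_filter_comp_equiv (bitIndexEquiv q w) fun p => wordIndicator (block x i) p = true).trans
    (by rw [card_filter_wordIndicator, Fintype.card_fin])

lemma sum_hammingDist_blockIndicator (x y : Fin (m * w) → Fin q) :
    ∑ i, hammingDist (blockIndicator x i) (blockIndicator y i) = 2 * hammingDist x y := by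
  simp only [blockIndicator, hammingDist_comp_equiv, hammingDist_wordIndicator, ← mul_sum,
    hammingDist_eq_sum_block x y]

lemma blockIndicator_injective : Function.Injective (blockIndicator (m := m) (w := w) (q := q)) :=
  fun x y hxy => by simpa [hxy] using sum_hammingDist_blockIndicator x y

lemma exists_multiConstantWeight_code_of_code (d : ℕ) (C : Finset (Fin (m * w) → Fin q))
    (hC : ∀ x ∈ C, ∀ y ∈ C, x ≠ y → d ≤ hammingDist x y) :
    ∃ E : Finset (Fin m → Fin (q * w) → Bool),
      E.card = C.card ∧ (∀ x ∈ E, ∀ i, wt (x i) = w) ∧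
      ∀ x ∈ E, ∀ y ∈ E, x ≠ y → 2 * d ≤ ∑ i, hammingDist (x i) (y i) := by
  refine ⟨C.image blockIndicator, card_image_of_injective C blockIndicator_injective, ?_, ?_⟩
  · simp only [mem_image]
    rintro _ ⟨x, -, rfl⟩ i
    exact wt_blockIndicator x i
  · simp only [mem_image]
    rintro _ ⟨x, hx, rfl⟩ _ ⟨y, hy, rfl⟩ hxy
    rw [sum_hammingDist_blockIndicator]
    exact Nat.mul_le_mul_left 2 (hC x hx y hy (ne_of_apply_ne _ hxy))

end BlockExpansion

lemma bddAbove_setOf_card {X : Type*} [Fintype X] (P : Finset X → Prop) :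
    BddAbove {s | ∃ C : Finset X, #C = s ∧ P C} :=
  ⟨Fintype.card X, by rintro s ⟨C, rfl, -⟩; exact card_le_univ C⟩

/-- Indicator-vector expansion: any `q`-ary code of length `mw` and distance `d` yields, by
replacing each symbol with its indicator vector in `{0,1}^q`, a binary code whose `m` blocks of
length `qw` each have weight exactly `w`, with distance at least `2d`;
hence `M(m,qw,2d,w) ≥ A_q(mw,d)`. -/
theorem stmt5 (m w q d : ℕ) :
    (∀ C : Finset (Fin (m * w) → Fin q),
      (∀ x ∈ C, ∀ y ∈ C, x ≠ y → d ≤ hammingDist x y) →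
      ∃ E : Finset (Fin m → Fin (q * w) → Bool),
        E.card = C.card ∧ (∀ x ∈ E, ∀ i, wt (x i) = w) ∧
        ∀ x ∈ E, ∀ y ∈ E, x ≠ y → 2 * d ≤ ∑ i, hammingDist (x i) (y i)) ∧
    Aq q (m * w) d ≤ M m (q * w) (2 * d) w := by
  refine ⟨exists_multiConstantWeight_code_of_code d, csSup_le_csSup' (bddAbove_setOf_card _) ?_⟩
  rintro s ⟨C, rfl, hC⟩
  exact exists_multiConstantWeight_code_of_code d C hC
end

section
/- If there exists a resolvable t-(v,k,1) design, then M(v/k, v, 2(k-t+1)*(v/k), k) >= k*binom(v,t)/(v*binom(k,t)); i.e., assigning to each parallel class the (v/k)-by-v binary matrix whose rows are the indicator vectors of its blocks produces a multiply constant-weight code with row weight k and minimum distance 2(v/k)(k-t+1), of size equal to the number of parallel classes. -/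
open Finset

/-! Each parallel class, listed in some order, gives the matrix whose rows are the incidence
vectors of its blocks. Blocks of one class partition the points, so a class has `v / k` blocks of
weight `k`; two distinct blocks share at most `t - 1` points, so their incidence vectors are at
distance at least `2 (k - t + 1)`, and distinct classes have no block in common, so their matrices
differ by that much in every one of the `v / k` rows. Double counting points, blocks and `t`-sets
shows that there are `k C(v,t) / (v C(k,t))` classes. -/

section SetSystems

variable {α ι : Type*} [DecidableEq α]

theorem card_eq_sum_card_of_existsUnique_mem {s : Finset α} {F : Finset ι} {f : ι → Finset α}
    (hsub : ∀ i ∈ F, f i ⊆ s) (huniq : ∀ x ∈ s, ∃! i, i ∈ F ∧ x ∈ f i) :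
    s.card = ∑ i ∈ F, (f i).card := by
  have hs : s = F.biUnion f := by
    ext x
    simp only [mem_biUnion]
    exact ⟨fun hx => (huniq x hx).exists, fun ⟨i, hi, hx⟩ => hsub i hi hx⟩
  rw [hs, card_biUnion]
  intro i hi j hj hij
  refine disjoint_left.2 fun x hxi hxj => hij ?_
  exact (huniq x (hsub i hi hxi)).unique ⟨hi, hxi⟩ ⟨hj, hxj⟩

theorem card_inter_lt_of_existsUnique_superset {B : Finset (Finset α)} {t : ℕ}
    (hdes : ∀ T : Finset α, T.card = t → ∃! b, b ∈ B ∧ T ⊆ b)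
    {b c : Finset α} (hb : b ∈ B) (hc : c ∈ B) (hbc : b ≠ c) : (b ∩ c).card < t := by
  by_contra! hle
  obtain ⟨T, hTbc, hT⟩ := exists_subset_card_eq hle
  exact hbc ((hdes T hT).unique ⟨hb, hTbc.trans inter_subset_left⟩
    ⟨hc, hTbc.trans inter_subset_right⟩)

end SetSystems

section Design

variable {v k t : ℕ} {B : Finset (Finset (Fin v))} {classes : Finset (Finset (Finset (Fin v)))}

theorem card_mul_eq_of_existsUnique_mem {P : Finset (Finset (Fin v))}
    (hblk : ∀ b ∈ P, b.card = k) (hpar : ∀ x : Fin v, ∃! b, b ∈ P ∧ x ∈ b) :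
    P.card * k = v := by
  have h := card_eq_sum_card_of_existsUnique_mem (s := univ) (f := id)
    (fun _ _ => subset_univ _) fun x _ => hpar x
  rw [card_univ, Fintype.card_fin] at h
  calc P.card * k = ∑ b ∈ P, b.card := by rw [sum_congr rfl hblk, sum_const, smul_eq_mul]
    _ = v := h.symm

theorem choose_eq_card_mul_choose (hblk : ∀ b ∈ B, b.card = k)
    (hdes : ∀ T : Finset (Fin v), T.card = t → ∃! b, b ∈ B ∧ T ⊆ b) :
    v.choose t = B.card * k.choose t := by
  have h := card_eq_sum_card_of_existsUnique_mem (s := powersetCard t univ) (F := B)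
    (f := powersetCard t) (fun _ _ => powersetCard_mono (subset_univ _)) fun T hT => by
      have hTt := (mem_powersetCard.1 hT).2
      simpa only [mem_powersetCard, hTt, and_true] using hdes T hTt
  rw [card_powersetCard, card_univ, Fintype.card_fin] at h
  rw [h, sum_congr rfl fun b hb => by rw [card_powersetCard, hblk b hb], sum_const, smul_eq_mul]

theorem mul_choose_eq_mul_choose_mul_card_classes (hblk : ∀ b ∈ B, b.card = k)
    (hdes : ∀ T : Finset (Fin v), T.card = t → ∃! b, b ∈ B ∧ T ⊆ b)
    (hcover : ∀ b ∈ B, ∃! P, P ∈ classes ∧ b ∈ P)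
    (hsub : ∀ P ∈ classes, ∀ b ∈ P, b ∈ B)
    (hpar : ∀ P ∈ classes, ∀ x : Fin v, ∃! b, b ∈ P ∧ x ∈ b) :
    k * v.choose t = v * k.choose t * classes.card := by
  have hB : B.card = ∑ P ∈ classes, P.card :=
    card_eq_sum_card_of_existsUnique_mem (f := id) (fun P hP b hb => hsub P hP b hb) hcover
  have hP : ∀ P ∈ classes, P.card * k = v := fun P hP =>
    card_mul_eq_of_existsUnique_mem (fun b hb => hblk b (hsub P hP b hb)) (hpar P hP)
  calc k * v.choose t = (∑ P ∈ classes, P.card * k) * k.choose t := by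
        rw [choose_eq_card_mul_choose hblk hdes, hB, ← sum_mul]
        ring
    _ = v * k.choose t * classes.card := by
        rw [sum_congr rfl hP, sum_const, smul_eq_mul]
        ring

end Design

section IncidenceCode

variable {n : ℕ}

def incidenceVector (b : Finset (Fin n)) : Fin n → Bool := fun j => decide (j ∈ b)

theorem incidenceVector_injective : Function.Injective (incidenceVector (n := n)) := by
  intro b c h
  ext j
  simpa [incidenceVector] using congrFun h j

theorem wt_incidenceVector (b : Finset (Fin n)) : wt (incidenceVector b) = b.card := by
  simp [wt, incidenceVector]

theorem hammingDist_incidenceVector (b c : Finset (Fin n)) :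
    hammingDist (incidenceVector b) (incidenceVector c) = (b \ c).card + (c \ b).card := by
  rw [hammingDist, ← card_union_of_disjoint disjoint_sdiff_sdiff]
  congr 1
  ext j
  by_cases hb : j ∈ b <;> by_cases hc : j ∈ c <;> simp [incidenceVector, hb, hc]

theorem two_mul_le_hammingDist_incidenceVector {k t : ℕ} {b c : Finset (Fin n)}
    (hb : b.card = k) (hc : c.card = k) (hbc : (b ∩ c).card < t) (htk : t ≤ k) :
    2 * (k - t + 1) ≤ hammingDist (incidenceVector b) (incidenceVector c) := by
  have hb' := card_sdiff_add_card_inter b c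
  have hc' := card_sdiff_add_card_inter c b
  rw [inter_comm] at hc'
  rw [hammingDist_incidenceVector]
  omega

theorem card_le_M {m d w : ℕ} (C : Finset (Fin m → Fin n → Bool))
    (hwt : ∀ x ∈ C, ∀ i, wt (x i) = w)
    (hdist : ∀ x ∈ C, ∀ y ∈ C, x ≠ y → d ≤ ∑ i, hammingDist (x i) (y i)) :
    C.card ≤ M m n d w := by
  refine le_csSup ⟨Fintype.card (Fin m → Fin n → Bool), ?_⟩ ⟨C, rfl, hwt, hdist⟩
  rintro _ ⟨C', rfl, -, -⟩
  exact card_le_univ C'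

theorem exists_image_univ_eq_of_card_eq {α : Type*} [DecidableEq α] {s : Finset α} {m : ℕ}
    (h : s.card = m) : ∃ e : Fin m → α, univ.image e = s := by
  refine ⟨fun i => (s.equivFinOfCardEq h).symm i, ?_⟩
  ext x
  simp only [mem_image, mem_univ, true_and]
  refine ⟨fun ⟨i, hi⟩ => hi ▸ ((s.equivFinOfCardEq h).symm i).2, fun hx => ?_⟩
  exact ⟨s.equivFinOfCardEq h ⟨x, hx⟩, by simp⟩

theorem card_le_M_of_classes {m δ w : ℕ} (classes : Finset (Finset (Finset (Fin n))))
    (hcard : ∀ P ∈ classes, P.card = m) (hwt : ∀ P ∈ classes, ∀ b ∈ P, b.card = w)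
    (hdist : ∀ P ∈ classes, ∀ Q ∈ classes, P ≠ Q → ∀ b ∈ P, ∀ c ∈ Q,
      δ ≤ hammingDist (incidenceVector b) (incidenceVector c)) :
    classes.card ≤ M m n (δ * m) w := by
  choose! e he using fun P hP => exists_image_univ_eq_of_card_eq (hcard P hP)
  have hmem : ∀ P ∈ classes, ∀ i, e P i ∈ P := fun P hP i =>
    (he P hP).subset (mem_image_of_mem _ (mem_univ i))
  let code := classes.image fun P i => incidenceVector (e P i)
  have hinj : Set.InjOn (fun P i => incidenceVector (e P i)) classes := by
    intro P hP Q hQ hPQ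
    have hrows : e P = e Q := funext fun i => incidenceVector_injective (congrFun hPQ i)
    rw [← he P hP, ← he Q hQ, hrows]
  rw [← card_image_of_injOn hinj]
  refine card_le_M code ?_ ?_
  · simp only [code, forall_mem_image, wt_incidenceVector]
    exact fun P hP i => hwt P hP _ (hmem P hP i)
  · simp only [code, forall_mem_image]
    intro P hP Q hQ hne
    have hPQ : P ≠ Q := by rintro rfl; exact hne rfl
    calc δ * m = ∑ _i : Fin m, δ := by simp [mul_comm]
      _ ≤ _ := sum_le_sum fun i _ => hdist P hP Q hQ hPQ _ (hmem P hP i) _ (hmem Q hQ i)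

end IncidenceCode

theorem stmt7_general (v k t : ℕ) (htk : t ≤ k)
    (B : Finset (Finset (Fin v)))
    (hblk : ∀ b ∈ B, b.card = k)
    (hdes : ∀ T : Finset (Fin v), T.card = t → ∃! b, b ∈ B ∧ T ⊆ b)
    (classes : Finset (Finset (Finset (Fin v))))
    (hcover : ∀ b ∈ B, ∃! P, P ∈ classes ∧ b ∈ P)
    (hsub : ∀ P ∈ classes, ∀ b ∈ P, b ∈ B)
    (hpar : ∀ P ∈ classes, ∀ x : Fin v, ∃! b, b ∈ P ∧ x ∈ b) :
    k * Nat.choose v t / (v * Nat.choose k t) ≤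
      M (v / k) v (2 * (k - t + 1) * (v / k)) k := by
  rcases Nat.eq_zero_or_pos k with rfl | hk
  · simp
  have hblk' : ∀ P ∈ classes, ∀ b ∈ P, b.card = k := fun P hP b hb => hblk b (hsub P hP b hb)
  calc k * v.choose t / (v * k.choose t) ≤ classes.card :=
        Nat.div_le_of_le_mul
          (mul_choose_eq_mul_choose_mul_card_classes hblk hdes hcover hsub hpar).le
    _ ≤ M (v / k) v (2 * (k - t + 1) * (v / k)) k := by
        refine card_le_M_of_classes classes (fun P hP => ?_) hblk' ?_
        · have h := card_mul_eq_of_existsUnique_mem (hblk' P hP) (hpar P hP)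
          exact Nat.eq_div_of_mul_eq_left hk.ne' h
        · intro P hP Q hQ hPQ b hb c hc
          have hbc : b ≠ c := by
            rintro rfl
            exact hPQ ((hcover b (hsub P hP b hb)).unique ⟨hP, hb⟩ ⟨hQ, hc⟩)
          exact two_mul_le_hammingDist_incidenceVector (hblk' P hP b hb) (hblk' Q hQ c hc)
            (card_inter_lt_of_existsUnique_superset hdes (hsub P hP b hb) (hsub Q hQ c hc) hbc) htk

/-- Resolvable design construction: a resolvable `t`-`(v,k,1)` design (blocks `B` of size `k`,
every `t`-set in exactly one block, blocks partitioned into parallel classes each of which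
partitions the point set) yields
`M(v/k, v, 2(k-t+1)(v/k), k) ≥ k·C(v,t)/(v·C(k,t))`, the number of parallel classes. -/
theorem stmt7 (v k t : ℕ) (ht : 0 < t) (htk : t ≤ k) (hkv : k ≤ v)
    (B : Finset (Finset (Fin v)))
    (hblk : ∀ b ∈ B, b.card = k)
    (hdes : ∀ T : Finset (Fin v), T.card = t → ∃! b, b ∈ B ∧ T ⊆ b)
    (classes : Finset (Finset (Finset (Fin v))))
    (hcover : ∀ b ∈ B, ∃! P, P ∈ classes ∧ b ∈ P)
    (hsub : ∀ P ∈ classes, ∀ b ∈ P, b ∈ B)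
    (hpar : ∀ P ∈ classes, ∀ x : Fin v, ∃! b, b ∈ P ∧ x ∈ b) :
    k * Nat.choose v t / (v * Nat.choose k t) ≤
      M (v / k) v (2 * (k - t + 1) * (v / k)) k :=
  stmt7_general v k t htk B hblk hdes classes hcover hsub hpar
end

section
/- Johnson-type bound (complementary form): T(w_1,n_1; ...; w_m,n_m; d) <= floor( (n_i / (n_i - w_i)) * T(w_1,n_1; ...; w_i, n_i - 1; ...; w_m,n_m; d) ) for each index i with w_i < n_i. -/
open Finset

/-- `T m n w d`: max size of a binary code with `m` blocks, the `i`-th of length `n i`, in which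
every codeword has weight exactly `w i` on block `i`, with minimum (total) Hamming distance `d`. -/
noncomputable def T (m : ℕ) (n w : Fin m → ℕ) (d : ℕ) : ℕ :=
  sSup {s | ∃ C : Finset ((i : Fin m) → Fin (n i) → Bool), C.card = s ∧
    (∀ x ∈ C, ∀ i, wt (x i) = w i) ∧
    ∀ x ∈ C, ∀ y ∈ C, x ≠ y → d ≤ ∑ i, hammingDist (x i) (y i)}

/-! Every codeword has `nᵢ - wᵢ` zeros in block `i`, so by double counting some position `p` of
block `i` is zero in at least `|C| (nᵢ - wᵢ) / nᵢ` codewords. Deleting `p` from those codewords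
changes neither their weights nor their mutual distances, and yields a code of the shortened
type, whose size is at most `T(…; wᵢ, nᵢ - 1; …; d)`. -/

theorem hammingDist_comp_embedding {α β γ : Type*} [Fintype α] [Fintype β] [DecidableEq γ]
    (e : α ↪ β) {x y : β → γ} (h : ∀ b ∉ Set.range e, x b = y b) :
    hammingDist (x ∘ e) (y ∘ e) = hammingDist x y := by
  unfold hammingDist
  rw [← card_map e]
  congr 1
  ext b
  simp only [mem_filter, mem_univ, true_and, mem_map, Function.comp_apply]
  constructor
  · rintro ⟨a, hne, rfl⟩
    exact hne
  · intro hne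
    by_contra hb
    exact hne (h b (by rintro ⟨a, rfl⟩; exact hb ⟨a, hne, rfl⟩))

theorem wt_eq_hammingDist {k : ℕ} (x : Fin k → Bool) : wt x = hammingDist x fun _ => false := by
  simp [wt, hammingDist]

theorem wt_add_card_filter_eq_false {k : ℕ} (x : Fin k → Bool) :
    wt x + #{p | x p = false} = k := by
  simpa [wt] using card_filter_add_card_filter_not (s := univ) fun p => x p = true

theorem wt_comp_embedding {k l : ℕ} (e : Fin k ↪ Fin l) {x : Fin l → Bool}
    (h : ∀ p ∉ Set.range e, x p = false) : wt (x ∘ e) = wt x := by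
  rw [wt_eq_hammingDist, wt_eq_hammingDist, ← hammingDist_comp_embedding e h]
  rfl

theorem sum_card_filter_eq_false {ι : Type*} {k r : ℕ} (C : Finset ι) (x : ι → Fin k → Bool)
    (hx : ∀ c ∈ C, wt (x c) = r) : ∑ p, #{c ∈ C | x c p = false} = #C * (k - r) :=
  calc ∑ p, #{c ∈ C | x c p = false}
      = ∑ c ∈ C, #{p | x c p = false} :=
        (sum_card_bipartiteAbove_eq_sum_card_bipartiteBelow (r := fun c p => x c p = false)).symm
    _ = ∑ c ∈ C, (k - r) := sum_congr rfl fun c hc => by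
        have := wt_add_card_filter_eq_false (x c)
        have := hx c hc
        omega
    _ = #C * (k - r) := by rw [sum_const, smul_eq_mul]

theorem exists_mul_card_le_mul_card_filter_eq_false {ι : Type*} {k r : ℕ} (hk : 0 < k)
    (C : Finset ι) (x : ι → Fin k → Bool) (hx : ∀ c ∈ C, wt (x c) = r) :
    ∃ p, #C * (k - r) ≤ k * #{c ∈ C | x c p = false} := by
  have hsum : ∑ _p : Fin k, #C * (k - r) ≤ ∑ p, k * #{c ∈ C | x c p = false} := by
    rw [← mul_sum _ _ k, sum_card_filter_eq_false C x hx]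
    simp
  obtain ⟨p, -, hp⟩ := exists_le_of_sum_le (univ_nonempty_iff.2 ⟨⟨0, hk⟩⟩) hsum
  exact ⟨p, hp⟩

section Code

variable {m : ℕ} {n w : Fin m → ℕ} {d : ℕ}

def IsConstWeightCode (n w : Fin m → ℕ) (d : ℕ) (C : Finset ((j : Fin m) → Fin (n j) → Bool)) :
    Prop :=
  (∀ x ∈ C, ∀ j, wt (x j) = w j) ∧ ∀ x ∈ C, ∀ y ∈ C, x ≠ y → d ≤ ∑ j, hammingDist (x j) (y j)

theorem IsConstWeightCode.subset {C C' : Finset ((j : Fin m) → Fin (n j) → Bool)}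
    (hC : IsConstWeightCode n w d C) (h : C' ⊆ C) : IsConstWeightCode n w d C' :=
  ⟨fun x hx => hC.1 x (h hx), fun x hx y hy => hC.2 x (h hx) y (h hy)⟩

theorem IsConstWeightCode.card_le_T {C : Finset ((j : Fin m) → Fin (n j) → Bool)}
    (hC : IsConstWeightCode n w d C) : #C ≤ T m n w d := by
  refine le_csSup ⟨Fintype.card ((j : Fin m) → Fin (n j) → Bool), ?_⟩ ⟨C, rfl, hC⟩
  rintro _ ⟨C', rfl, -⟩
  exact card_le_univ C'

theorem T_le {b : ℕ} (h : ∀ C, IsConstWeightCode n w d C → #C ≤ b) : T m n w d ≤ b :=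
  csSup_le' fun _ ⟨C, hs, hC⟩ => hs ▸ h C hC

/-- Puncturing at the positions outside `S`, where all codewords vanish, keeps weights and
distances. -/
theorem IsConstWeightCode.card_le_T_of_eq_false_outside {n' : Fin m → ℕ}
    {C : Finset ((j : Fin m) → Fin (n j) → Bool)} (hC : IsConstWeightCode n w d C)
    (S : (j : Fin m) → Finset (Fin (n j))) (hS : ∀ j, #(S j) = n' j)
    (hCS : ∀ x ∈ C, ∀ j, ∀ p ∉ S j, x j p = false) : #C ≤ T m n' w d := by
  let e : (j : Fin m) → Fin (n' j) ↪ Fin (n j) := fun j =>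
    ((S j).orderEmbOfFin (hS j)).toEmbedding
  have he : ∀ x ∈ C, ∀ j, ∀ p ∉ Set.range (e j), x j p = false := by
    intro x hx j p hp
    exact hCS x hx j p (by simpa [e, range_orderEmbOfFin] using hp)
  have hdist : ∀ x ∈ C, ∀ y ∈ C, ∀ j,
      hammingDist (x j ∘ e j) (y j ∘ e j) = hammingDist (x j) (y j) := fun x hx y hy j =>
    hammingDist_comp_embedding (e j) fun p hp => (he x hx j p hp).trans (he y hy j p hp).symm
  let restrict : ((j : Fin m) → Fin (n j) → Bool) → (j : Fin m) → Fin (n' j) → Bool :=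
    fun x j => x j ∘ e j
  have hinj : Set.InjOn restrict C := by
    intro x hx y hy hxy
    funext j
    rw [← hammingDist_eq_zero, ← hdist x hx y hy j]
    exact hammingDist_eq_zero.2 (congrFun hxy j)
  rw [← card_image_of_injOn hinj]
  refine IsConstWeightCode.card_le_T ⟨?_, ?_⟩
  · simp only [mem_image, forall_exists_index, and_imp]
    rintro _ x hx rfl j
    exact (wt_comp_embedding (e j) (he x hx j)).trans (hC.1 x hx j)
  · simp only [mem_image, forall_exists_index, and_imp]
    rintro _ x hx rfl _ y hy rfl hxy
    simp only [restrict, hdist x hx y hy]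
    exact hC.2 x hx y hy fun h => hxy (h ▸ rfl)

theorem IsConstWeightCode.card_filter_eq_false_le_T_update
    {C : Finset ((j : Fin m) → Fin (n j) → Bool)} (hC : IsConstWeightCode n w d C) (i : Fin m)
    (p : Fin (n i)) : #{x ∈ C | x i p = false} ≤ T m (Function.update n i (n i - 1)) w d := by
  refine (hC.subset (filter_subset _ _)).card_le_T_of_eq_false_outside
    (Function.update (fun j => univ) i {p}ᶜ) (fun j => ?_) ?_
  · rcases eq_or_ne j i with rfl | hj
    · simp [card_compl]
    · simp [hj]
  · intro x hx j q hq
    rcases eq_or_ne j i with rfl | hj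
    · simp only [Function.update_self, mem_compl, mem_singleton, not_not] at hq
      exact hq ▸ (mem_filter.1 hx).2
    · simp [hj] at hq

end Code

/-- Johnson-type bound (complementary form):
`T(…; wᵢ, nᵢ; …; d) ≤ ⌊(nᵢ/(nᵢ-wᵢ))·T(…; wᵢ, nᵢ-1; …; d)⌋` whenever `wᵢ < nᵢ`. -/
theorem stmt10 (m : ℕ) (n w : Fin m → ℕ) (d : ℕ) (i : Fin m) (hw : w i < n i) :
    T m n w d ≤ n i * T m (Function.update n i (n i - 1)) w d / (n i - w i) := by
  refine T_le fun C hC => (Nat.le_div_iff_mul_le (by omega)).2 ?_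
  obtain ⟨p, hp⟩ := exists_mul_card_le_mul_card_filter_eq_false (by omega) C (fun x => x i)
    fun x hx => hC.1 x hx i
  exact hp.trans (Nat.mul_le_mul_left _ (hC.card_filter_eq_false_le_T_update i p))
end

section
/- If s = mw - d/2 + 1 <= m, n/w is a prime power, and n/w >= mw - 1, then M(m,n,d,w) = (n/w)^s exactly. -/
/-!
Upper bound: to a codeword attach the set of ways of choosing a `1` in each of its first `s`
rows. It has `w ^ s` elements, and two codewords sharing such a choice have a common `1` in `s`
rows, so their distance is at most `2 m w - 2 s < 2 u`. These sets are therefore disjoint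
subsets of `[n] ^ s`, whence `|C| w ^ s ≤ n ^ s`.

Lower bound: with `q = n / w`, the extended Reed–Solomon code over `𝔽_q` of length `m w ≤ q + 1`
and dimension `s` has `q ^ s` words at pairwise distance `≥ m w - s + 1 = u`. Cutting a word into
`m` blocks of `w` symbols and replacing each symbol by its indicator vector in `{0,1}^q` gives rows
of weight `w` and length `w q = n`, and doubles all distances.
-/

open Finset

open Polynomial

def IsMultiConstWeightCode {m n : ℕ} (w d : ℕ) (C : Finset (Fin m → Fin n → Bool)) : Prop :=
  (∀ x ∈ C, ∀ i, wt (x i) = w) ∧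
    ∀ x ∈ C, ∀ y ∈ C, x ≠ y → d ≤ ∑ i, hammingDist (x i) (y i)

theorem hammingDist_add_two_mul_card_inter {n : ℕ} (a b : Fin n → Bool) :
    hammingDist a b + 2 * #{i | a i = true ∧ b i = true} = wt a + wt b := by
  simp only [hammingDist, wt, card_filter, mul_sum, ← sum_add_distrib]
  refine sum_congr rfl fun i _ => ?_
  cases a i <;> cases b i <;> rfl

section SingletonBound

variable {m n s : ℕ}

def transversals (hs : s ≤ m) (c : Fin m → Fin n → Bool) : Finset (Fin s → Fin n) :=
  Fintype.piFinset fun j => {y | c (Fin.castLE hs j) y = true}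

theorem card_transversals (hs : s ≤ m) {w : ℕ} {c : Fin m → Fin n → Bool}
    (hc : ∀ i, wt (c i) = w) : #(transversals hs c) = w ^ s := by
  simp only [transversals, Fintype.card_piFinset]
  exact (prod_congr rfl fun j _ => hc _).trans (by simp)

theorem pairwiseDisjoint_transversals (hs : s ≤ m) {w u : ℕ} (hsu : m * w < s + u)
    {C : Finset (Fin m → Fin n → Bool)} (hC : IsMultiConstWeightCode w (2 * u) C) :
    (C : Set (Fin m → Fin n → Bool)).PairwiseDisjoint (transversals hs) := by
  intro c hc c' hc' hne
  refine disjoint_left.mpr fun x hx hx' => ?_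
  simp only [transversals, Fintype.mem_piFinset, mem_filter, mem_univ, true_and] at hx hx'
  set common : Fin m → ℕ := fun i => #{y | c i y = true ∧ c' i y = true}
  have hsum : ∑ i, hammingDist (c i) (c' i) + 2 * ∑ i, common i = m * (2 * w) := by
    rw [mul_sum, ← sum_add_distrib]
    simp only [common, hammingDist_add_two_mul_card_inter, hC.1 c hc, hC.1 c' hc']
    simp [two_mul]
  have hcommon : s ≤ ∑ i, common i :=
    calc s = ∑ j : Fin s, 1 := by simp
      _ ≤ ∑ j : Fin s, common (Fin.castLEEmb hs j) :=
          sum_le_sum fun j _ => card_pos.mpr ⟨x j, by simp [hx j, hx' j]⟩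
      _ = ∑ i ∈ univ.map (Fin.castLEEmb hs), common i := (sum_map _ _ _).symm
      _ ≤ ∑ i, common i := sum_le_sum_of_subset (subset_univ _)
  have hdist := hC.2 c hc c' hc' hne
  linarith

theorem card_mul_pow_le_pow (hs : s ≤ m) {w u : ℕ} (hsu : m * w < s + u)
    {C : Finset (Fin m → Fin n → Bool)} (hC : IsMultiConstWeightCode w (2 * u) C) :
    #C * w ^ s ≤ n ^ s :=
  calc #C * w ^ s = ∑ c ∈ C, #(transversals hs c) := by
        rw [sum_congr rfl fun c hc => card_transversals hs (hC.1 c hc), sum_const, smul_eq_mul]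
    _ = #(C.biUnion (transversals hs)) :=
        (card_biUnion (pairwiseDisjoint_transversals hs hsu hC)).symm
    _ ≤ Fintype.card (Fin s → Fin n) := card_le_univ _
    _ = n ^ s := by simp

end SingletonBound

section ReedSolomon

variable {F : Type*} [Field F]

/-- Evaluation of a polynomial of degree at most `d` on the projective line `Option F`. -/
def extEval (d : ℕ) (f : F[X]) : Option F → F
  | none => f.coeff d
  | some x => f.eval x

theorem extEval_sub (d : ℕ) (f g : F[X]) (x : Option F) :
    extEval d (f - g) x = extEval d f x - extEval d g x := by
  cases x <;> simp [extEval]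

theorem card_extEval_eq_zero_le [Fintype F] [DecidableEq F] {d : ℕ} {f : F[X]} (hf : f ≠ 0)
    (hfd : f.natDegree ≤ d) : #{x | extEval d f x = 0} ≤ d := by
  rw [card_filter, Fintype.sum_option, ← card_filter]
  refine (add_le_add le_rfl (card_le_degree_of_subset_roots (p := f) ?_)).trans ?_
  · intro x hx
    exact (mem_roots hf).mpr (mem_filter.mp hx).2
  have hlead : f.coeff f.natDegree ≠ 0 := leadingCoeff_ne_zero.mpr hf
  split_ifs with hcoeff
  · have : f.natDegree ≠ d := fun h => hlead (h ▸ hcoeff)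
    omega
  · omega

theorem exists_code_card_eq_pow_of_embedding [Fintype F] [DecidableEq F] {κ : Type*} [Fintype κ]
    (ι : κ ↪ Option F) {d : ℕ} (hd : d < Fintype.card κ) :
    ∃ D : Finset (κ → F), #D = Fintype.card F ^ (d + 1) ∧
      ∀ x ∈ D, ∀ y ∈ D, x ≠ y → Fintype.card κ - d ≤ hammingDist x y := by
  classical
  set P : (Fin (d + 1) → F) → F[X] := fun c => (degreeLTEquiv F (d + 1)).symm c
  set v : (Fin (d + 1) → F) → κ → F := fun c k => extEval d (P c) (ι k)
  have hdist : ∀ c c', c ≠ c' → Fintype.card κ - d ≤ hammingDist (v c) (v c') := by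
    intro c c' hne
    have hsub : P c - P c' ≠ 0 := sub_ne_zero.mpr fun h => hne <| by
      simpa [P] using congrArg (degreeLTEquiv F (d + 1)) (Subtype.ext h)
    have hdeg : (P c - P c').natDegree ≤ d := by
      have := (natDegree_lt_iff_degree_lt hsub).mpr <| mem_degreeLT.mp <|
        sub_mem ((degreeLTEquiv F (d + 1)).symm c).2 ((degreeLTEquiv F (d + 1)).symm c').2
      omega
    have hagree : #{k | v c k = v c' k} ≤ d :=
      calc #{k | v c k = v c' k} = #(({k | v c k = v c' k} : Finset κ).map ι) := (card_map _).symm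
        _ ≤ #{x | extEval d (P c - P c') x = 0} := card_le_card fun x hx => by
            obtain ⟨k, hk, rfl⟩ := mem_map.mp hx
            simpa [extEval_sub, sub_eq_zero, v] using hk
        _ ≤ d := card_extEval_eq_zero_le hsub hdeg
    have := card_filter_add_card_filter_not (s := univ) fun k => v c k ≠ v c' k
    simp only [not_not, card_univ] at this
    rw [hammingDist]
    omega
  have hinj : Function.Injective v := fun c c' h => by
    by_contra hne
    have := hdist c c' hne
    rw [h, hammingDist_self] at this
    omega
  refine ⟨univ.image v, ?_, ?_⟩
  · rw [card_image_of_injective _ hinj, card_univ, Fintype.card_fun, Fintype.card_fin]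
  · simp only [mem_image, mem_univ, true_and]
    rintro _ ⟨c, rfl⟩ _ ⟨c', rfl⟩ hne
    exact hdist c c' fun h => hne (h ▸ rfl)

end ReedSolomon

theorem hammingDist_eq_sum_hammingDist_curry {α : Type*} [DecidableEq α] {m w : ℕ}
    (x y : Fin m × Fin w → α) :
    hammingDist x y = ∑ i, hammingDist (fun j => x (i, j)) (fun j => y (i, j)) := by
  simp only [hammingDist, card_filter, Fintype.sum_prod_type]

section IndicatorExpansion

variable {n w : ℕ} {α : Type*} [Fintype α] [DecidableEq α]

def indicatorExpand (E : Fin n ≃ Fin w × α) (g : Fin w → α) : Fin n → Bool :=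
  fun y => decide ((E y).2 = g (E y).1)

theorem card_filter_not_eq_iff_eq (a b : α) :
    #{t : α | ¬(t = a ↔ t = b)} = if a = b then 0 else 2 := by
  split_ifs with h
  · simp [h]
  · rw [← card_pair h]
    congr 1
    ext t
    by_cases ha : t = a <;> by_cases hb : t = b <;> simp_all [eq_comm]

theorem wt_indicatorExpand (E : Fin n ≃ Fin w × α) (g : Fin w → α) :
    wt (indicatorExpand E g) = w := by
  simp only [wt, indicatorExpand, decide_eq_true_eq, card_filter]
  rw [E.sum_comp fun p => if p.2 = g p.1 then 1 else 0, Fintype.sum_prod_type]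
  simp

theorem hammingDist_indicatorExpand (E : Fin n ≃ Fin w × α) (g g' : Fin w → α) :
    hammingDist (indicatorExpand E g) (indicatorExpand E g') = 2 * hammingDist g g' := by
  simp only [hammingDist, indicatorExpand, card_filter, ne_eq, decide_eq_decide, mul_sum]
  rw [E.sum_comp fun p => if ¬(p.2 = g p.1 ↔ p.2 = g' p.1) then 1 else 0,
    Fintype.sum_prod_type]
  refine sum_congr rfl fun j _ => ?_
  rw [← card_filter]
  dsimp only
  rw [card_filter_not_eq_iff_eq]
  split_ifs <;> simp

theorem exists_isMultiConstWeightCode_of_code {m : ℕ} (E : Fin n ≃ Fin w × α)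
    {D : Finset (Fin m × Fin w → α)} {u : ℕ}
    (hD : ∀ x ∈ D, ∀ y ∈ D, x ≠ y → u ≤ hammingDist x y) :
    ∃ C : Finset (Fin m → Fin n → Bool), #C = #D ∧ IsMultiConstWeightCode w (2 * u) C := by
  set Φ : (Fin m × Fin w → α) → Fin m → Fin n → Bool :=
    fun x i => indicatorExpand E fun j => x (i, j)
  have hdist : ∀ x y, ∑ i, hammingDist (Φ x i) (Φ y i) = 2 * hammingDist x y := fun x y => by
    simp only [Φ, hammingDist_indicatorExpand, ← mul_sum, hammingDist_eq_sum_hammingDist_curry]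
  have hinj : Function.Injective Φ := fun x y h => by
    simpa [h] using hdist x y
  refine ⟨D.image Φ, card_image_of_injective _ hinj, ?_, ?_⟩
  · simp only [mem_image]
    rintro _ ⟨x, -, rfl⟩ i
    exact wt_indicatorExpand E _
  · simp only [mem_image]
    rintro _ ⟨x, hx, rfl⟩ _ ⟨y, hy, rfl⟩ hne
    rw [hdist]
    exact Nat.mul_le_mul_left 2 (hD x hx y hy fun h => hne (h ▸ rfl))

end IndicatorExpansion

theorem exists_isMultiConstWeightCode_card_eq_pow {F : Type*} [Field F] [Fintype F]
    [DecidableEq F] {m n w d : ℕ} (E : Fin n ≃ Fin w × F) (hmw : m * w ≤ Fintype.card F + 1)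
    (hd : d < m * w) :
    ∃ C : Finset (Fin m → Fin n → Bool),
      #C = Fintype.card F ^ (d + 1) ∧ IsMultiConstWeightCode w (2 * (m * w - d)) C := by
  obtain ⟨ι⟩ := Function.Embedding.nonempty_of_card_le (α := Fin m × Fin w) (β := Option F)
    (by simpa using hmw)
  obtain ⟨D, hDcard, hD⟩ := exists_code_card_eq_pow_of_embedding ι (d := d) (by simpa using hd)
  obtain ⟨C, hCcard, hC⟩ := exists_isMultiConstWeightCode_of_code E (u := m * w - d)
    (by simpa using hD)
  exact ⟨C, hCcard.trans hDcard, hC⟩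

theorem card_le_pow_of_isMultiConstWeightCode {m w q s u : ℕ} (hw : 0 < w) (hs : s ≤ m)
    (hsu : m * w < s + u) {C : Finset (Fin m → Fin (w * q) → Bool)}
    (hC : IsMultiConstWeightCode w (2 * u) C) : #C ≤ q ^ s := by
  have := card_mul_pow_le_pow hs hsu hC
  rw [mul_pow, mul_comm] at this
  exact Nat.le_of_mul_le_mul_left this (pow_pos hw s)

/-- Exactness: if `s = mw - d/2 + 1 ≤ m` (here `d = 2u`, `s = mw - u + 1`), `n/w` is a prime
power and `n/w ≥ mw - 1`, then `M(m,n,d,w) = (n/w)^s`. -/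
theorem stmt15 (m n w u : ℕ) (hw : 0 < w) (hu : 0 < u) (hum : u ≤ m * w)
    (hdvd : w ∣ n) (hs : m * w - u + 1 ≤ m)
    (hq : ∃ p r : ℕ, p.Prime ∧ 0 < r ∧ n / w = p ^ r)
    (hqn : m * w - 1 ≤ n / w) :
    M m n (2 * u) w = (n / w) ^ (m * w - u + 1) := by
  obtain ⟨p, r, hp, hr, hpr⟩ := hq
  have : Fact p.Prime := ⟨hp⟩
  let : Fintype (GaloisField p r) := Fintype.ofFinite _
  have hF : Fintype.card (GaloisField p r) = n / w := by
    rw [Fintype.card_eq_nat_card, GaloisField.card p r hr.ne', hpr]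
  obtain ⟨k, rfl⟩ := hdvd
  rw [Nat.mul_div_cancel_left k hw] at hF hqn ⊢
  classical
  let E : Fin (w * k) ≃ Fin w × GaloisField p r :=
    finProdFinEquiv.symm.trans ((Equiv.refl _).prodCongr (Fintype.equivFinOfCardEq hF).symm)
  obtain ⟨C, hCcard, hC⟩ :=
    exists_isMultiConstWeightCode_card_eq_pow (m := m) E (by omega) (d := m * w - u) (by omega)
  rw [Nat.sub_sub_self hum] at hC
  rw [hF] at hCcard
  refine IsGreatest.csSup_eq ⟨⟨C, hCcard, hC⟩, ?_⟩
  rintro _ ⟨C', rfl, hC'⟩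
  exact card_le_pow_of_isMultiConstWeightCode hw hs (by omega) hC'
end
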